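/- arXiv:2304.12595 — 3 statements merged into one kernel-verified Lean document; each statement's English description precedes it below -/
import Mathlib

section
/- Let ξ, η ∈ ℝ³ and define the normal vectors of the surface {(ζ, ζ₁², ζ₂²+ζ₁ζ₃)} ⊂ ℝ⁵ at ζ by n¹_ζ = (2ζ₁, 0, 0, −1, 0) and n²_ζ = (ζ₃, 2ζ₂, ζ₁, 0, −1). Then the four vectors n¹_ξ, n²_ξ, n¹_η, n²_η in ℝ⁵ are linearly dependent over ℝ if and only if ξ₁ = η₁. -/
/-- Normal vector n¹ of the surface {(ζ, ζ₁², ζ₂²+ζ₁ζ₃)} at ζ. -/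
noncomputable def n1a (ζ : Fin 3 → ℝ) : Fin 5 → ℝ := ![2 * ζ 0, 0, 0, -1, 0]

/-- Normal vector n² of the surface {(ζ, ζ₁², ζ₂²+ζ₁ζ₃)} at ζ. -/
noncomputable def n2a (ζ : Fin 3 → ℝ) : Fin 5 → ℝ := ![ζ 2, 2 * ζ 1, ζ 0, 0, -1]

theorem stmt0 (ξ η : Fin 3 → ℝ) :
    (∃ k₁ k₂ l₁ l₂ : ℝ, ¬(k₁ = 0 ∧ k₂ = 0 ∧ l₁ = 0 ∧ l₂ = 0) ∧
      k₁ • n1a ξ + k₂ • n2a ξ + l₁ • n1a η + l₂ • n2a η = 0)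
    ↔ ξ 0 = η 0 := by
  constructor
  · rintro ⟨k₁, k₂, l₁, l₂, hne, h⟩
    have h0 := congrFun h 0
    have h2 := congrFun h 2
    have h3 := congrFun h 3
    have h4 := congrFun h 4
    simp [n1a, n2a] at h0 h2 h3 h4
    have hl1 : l₁ = -k₁ := by linarith
    have hl2 : l₂ = -k₂ := by linarith
    subst hl1 hl2
    by_cases hk2 : k₂ = 0
    · have hk1 : k₁ ≠ 0 := by
        intro hk1; exact hne ⟨hk1, hk2, by rw [hk1]; ring, by rw [hk2]; ring⟩
      have : k₁ * (ξ 0 - η 0) = 0 := by subst hk2; linarith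
      rcases mul_eq_zero.1 this with h' | h'
      · exact absurd h' hk1
      · linarith
    · have : k₂ * (ξ 0 - η 0) = 0 := by linarith
      rcases mul_eq_zero.1 this with h' | h'
      · exact absurd h' hk2
      · linarith
  · intro hh
    refine ⟨1, 0, -1, 0, by simp, ?_⟩
    funext i
    fin_cases i <;> simp [n1a, n2a, hh]
end

section
/- Let E be a finite-dimensional real inner product space and let V₁, …, V_k ⊆ E be linear subspaces such that the orthogonal complements V₁^⊥, …, V_k^⊥ form a direct sum (pairwise-independent family whose total sum is direct). Then for every linear subspace V ⊆ E, ∑_{j=1}^{k} dim π_{V_j}(V) ≥ (k − 1) · dim V, where π_{V_j} is the orthogonal projection onto V_j. -/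
/-!
Rank–nullity for the restriction of `π_{V_j}` to `V` gives
`dim π_{V_j}(V) = dim V - dim (V ∩ V_jᗮ)`. The subspaces `V ∩ V_jᗮ` of `V` are independent
because the `V_jᗮ` are, so their dimensions add up to at most `dim V`; summing over `j` gives
`∑ dim π_{V_j}(V) ≥ k dim V - dim V`.
-/

open Module

section

variable {K E : Type*} [DivisionRing K] [AddCommGroup E] [Module K E]

theorem Submodule.finrank_map_add_finrank_inf_ker [FiniteDimensional K E] {F : Type*}
    [AddCommGroup F] [Module K F] (f : E →ₗ[K] F) (V : Submodule K E) :
    finrank K (V.map f) + finrank K ↥(V ⊓ LinearMap.ker f) = finrank K V := by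
  have h := (f.domRestrict V).finrank_range_add_finrank_ker
  rwa [LinearMap.range_domRestrict, LinearMap.ker_domRestrict,
    ← Submodule.finrank_map_subtype_eq, Submodule.map_comap_subtype] at h

theorem iSupIndep.sum_finrank_le_of_le [FiniteDimensional K E] {ι : Type*} [Fintype ι]
    {W : ι → Submodule K E} (hW : iSupIndep W) {U : Submodule K E} (hWU : ∀ i, W i ≤ U) :
    ∑ i, finrank K (W i) ≤ finrank K U := by
  classical
  calc ∑ i, finrank K (W i) = finrank K (DirectSum ι fun i => W i) :=
        (finrank_directSum K _).symm
    _ = finrank K (LinearMap.range (DFinsupp.lsum ℕ fun i => (W i).subtype)) :=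
        (LinearMap.finrank_range_of_inj hW.dfinsupp_lsum_injective).symm
    _ ≤ finrank K U := by
        apply Submodule.finrank_mono
        rw [← Submodule.iSup_eq_range_dfinsupp_lsum]
        exact iSup_le hWU

theorem card_sub_one_mul_finrank_le_sum_finrank_map [FiniteDimensional K E] {ι : Type*}
    [Fintype ι] {F : ι → Type*} [∀ i, AddCommGroup (F i)] [∀ i, Module K (F i)]
    (f : ∀ i, E →ₗ[K] F i) (hf : iSupIndep fun i => LinearMap.ker (f i))
    (V : Submodule K E) :
    (Fintype.card ι - 1) * finrank K V ≤ ∑ i, finrank K (V.map (f i)) := by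
  have rank_nullity := fun i => Submodule.finrank_map_add_finrank_inf_ker (f i) V
  have sum_ker_le : ∑ i, finrank K ↥(V ⊓ LinearMap.ker (f i)) ≤ finrank K V :=
    (hf.mono fun i => inf_le_right).sum_finrank_le_of_le fun i => inf_le_left
  have sum_eq : ∑ i, finrank K (V.map (f i)) + ∑ i, finrank K ↥(V ⊓ LinearMap.ker (f i)) =
      Fintype.card ι * finrank K V := by
    simp only [← Finset.sum_add_distrib, rank_nullity, Finset.sum_const, smul_eq_mul,
      Finset.card_univ]
  rw [Nat.sub_one_mul]
  omega

end

theorem stmt11 (E : Type*) [NormedAddCommGroup E] [InnerProductSpace ℝ E]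
    [FiniteDimensional ℝ E] (k : ℕ) (Vsub : Fin k → Submodule ℝ E)
    (hV : ∀ j : Fin k, (Vsub j)ᗮ ⊓ (⨆ i ∈ {i : Fin k | i ≠ j}, (Vsub i)ᗮ) = ⊥)
    (V : Submodule ℝ E) :
    (k - 1) * Module.finrank ℝ V
      ≤ ∑ j : Fin k, Module.finrank ℝ
          (V.map ((Vsub j).subtypeL.comp (Vsub j).orthogonalProjectionOnto).toLinearMap) := by
  have hindep : iSupIndep fun j => LinearMap.ker ((Vsub j).starProjection : E →ₗ[ℝ] E) := by
    simp only [Submodule.ker_starProjection]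
    exact fun j => disjoint_iff.mpr (hV j)
  have h := card_sub_one_mul_finrank_le_sum_finrank_map _ hindep V
  rw [Fintype.card_fin] at h
  -- `starProjection` unfolds to `subtypeL ∘L orthogonalProjectionOnto`.
  exact h
end

section
/- Let Q₁ and Q₂ be any two real quadratic forms on ℝ³. Then there exist real numbers (a, b) ≠ (0, 0) and an invertible linear map M : ℝ³ → ℝ³ such that the quadratic form ξ ↦ a·Q₁(Mξ) + b·Q₂(Mξ) does not depend on the third coordinate ξ₃ (equivalently, its partial derivative in ξ₃ vanishes identically). -/
/-!
For symmetric matrices `A₁, A₂` of `Q₁, Q₂`, the polynomial `t ↦ det (t A₁ + A₂)` has degree 3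
unless `det A₁ = 0`, so it has a real root: some nontrivial combination `Q = a Q₁ + b Q₂` is
degenerate. A nonzero vector `v` of its radical satisfies `Q (x + c v) = Q x`, and any linear
isomorphism sending the third basis vector to `v` makes `Q` independent of `ξ₃`.
-/

open Polynomial Filter

theorem Real.exists_isRoot_of_odd_natDegree {p : ℝ[X]} (hp : Odd p.natDegree) :
    ∃ x, p.IsRoot x := by
  set q := p.comp (-X)
  have hp_deg : 0 < p.degree := natDegree_pos_iff_degree_pos.mp hp.pos
  have hq_deg : 0 < q.degree := by
    rw [← natDegree_pos_iff_degree_pos, natDegree_comp]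
    simpa using hp.pos
  have hq_lc : q.leadingCoeff = -p.leadingCoeff := by
    rw [leadingCoeff_comp (by simp)]
    simp [hp.neg_one_pow]
  have hp_atBot : ∀ l, Tendsto q.eval atTop l → Tendsto p.eval atBot l := fun l h => by
    simpa [Function.comp_def, q] using h.comp tendsto_neg_atBot_atTop
  rcases le_total 0 p.leadingCoeff with hlc | hlc
  · exact p.continuous.surjective (p.tendsto_atTop_of_leadingCoeff_nonneg hp_deg hlc)
      (hp_atBot _ (q.tendsto_atBot_of_leadingCoeff_nonpos hq_deg (by linarith))) 0
  · exact p.continuous.surjective'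
      (hp_atBot _ (q.tendsto_atTop_of_leadingCoeff_nonneg hq_deg (by linarith)))
      (p.tendsto_atBot_of_leadingCoeff_nonpos hp_deg hlc) 0

theorem Matrix.exists_det_smul_add_smul_eq_zero {n : Type*} [Fintype n] [DecidableEq n]
    (hn : Odd (Fintype.card n)) (A B : Matrix n n ℝ) :
    ∃ a b : ℝ, (a, b) ≠ (0, 0) ∧ (a • A + b • B).det = 0 := by
  by_cases hA : A.det = 0
  · exact ⟨1, 0, by simp, by simpa using hA⟩
  set p : ℝ[X] := ((X : ℝ[X]) • A.map C + B.map C).det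
  have hp : p.natDegree = Fintype.card n :=
    natDegree_eq_of_le_of_coeff_ne_zero (natDegree_det_X_add_C_le A B)
      (by rwa [coeff_det_X_add_C_card])
  obtain ⟨t, ht⟩ := Real.exists_isRoot_of_odd_natDegree (hp ▸ hn : Odd p.natDegree)
  refine ⟨t, 1, by simp, ?_⟩
  rw [← ht.eq_zero, ← coe_evalRingHom, RingHom.map_det]
  congr 1
  ext i j
  simp [mul_comm t]

theorem exists_linearEquiv_apply_eq {K V : Type*} [DivisionRing K] [AddCommGroup V] [Module K V]
    {u v : V} (hu : u ≠ 0) (hv : v ≠ 0) : ∃ g : V ≃ₗ[K] V, g u = v := by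
  obtain ⟨g, hg⟩ := Submodule.exists_linearEquiv_restrict_eq
    ((LinearEquiv.toSpanNonzeroSingleton K V u hu).symm ≪≫ₗ
      LinearEquiv.toSpanNonzeroSingleton K V v hv)
  have := hg (LinearEquiv.toSpanNonzeroSingleton K V u hu 1)
  rw [LinearEquiv.trans_apply, LinearEquiv.symm_apply_apply] at this
  exact ⟨g, by simpa using this.symm⟩

namespace QuadraticMap

variable {R M N : Type*} [CommRing R] [Invertible (2 : R)] [AddCommGroup M] [Module R M]
  [AddCommGroup N] [Module R N]

theorem map_add_smul_of_associated_eq_zero (Q : QuadraticMap R M N) {v : M}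
    (hv : ∀ x, associated Q x v = 0) (x : M) (c : R) : Q (x + c • v) = Q x := by
  have hv' : ∀ x, associated Q v x = 0 := fun x => by rw [associated_isSymm]; exact hv x
  rw [← associated_eq_self_apply R Q (x + c • v), ← associated_eq_self_apply R Q x]
  simp [hv, hv']

end QuadraticMap

namespace QuadraticForm

variable {K n : Type*} [Field K] [Invertible (2 : K)] [Fintype n] [DecidableEq n]

theorem exists_associated_eq_zero_of_det_toMatrix'_eq_zero {Q : QuadraticForm K (n → K)}
    (h : Q.toMatrix'.det = 0) : ∃ v ≠ 0, ∀ x, QuadraticMap.associated Q x v = 0 := by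
  obtain ⟨v, hv, hQv⟩ := Matrix.exists_mulVec_eq_zero_iff.mpr h
  refine ⟨v, hv, fun x => ?_⟩
  rw [← Matrix.toLinearMap₂'_toMatrix' (R := K) (QuadraticMap.associated Q), ← toMatrix',
    Matrix.toLinearMap₂'_apply', hQv, dotProduct_zero]

end QuadraticForm

theorem stmt16 (Q₁ Q₂ : QuadraticForm ℝ (Fin 3 → ℝ)) :
    ∃ a b : ℝ, (a, b) ≠ (0, 0) ∧
      ∃ M : (Fin 3 → ℝ) ≃ₗ[ℝ] (Fin 3 → ℝ),
        ∀ ξ ξ' : Fin 3 → ℝ, ξ 0 = ξ' 0 → ξ 1 = ξ' 1 →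
          a * Q₁ (M ξ) + b * Q₂ (M ξ) = a * Q₁ (M ξ') + b * Q₂ (M ξ') := by
  obtain ⟨a, b, hab, hdet⟩ := Matrix.exists_det_smul_add_smul_eq_zero
    (by decide : Odd (Fintype.card (Fin 3))) Q₁.toMatrix' Q₂.toMatrix'
  set Q := a • Q₁ + b • Q₂
  have hQ : Q.toMatrix'.det = 0 := by simpa [Q, QuadraticForm.toMatrix'] using hdet
  obtain ⟨v, hv, hrad⟩ := QuadraticForm.exists_associated_eq_zero_of_det_toMatrix'_eq_zero hQ
  obtain ⟨M, hM⟩ :=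
    exists_linearEquiv_apply_eq (K := ℝ) (Pi.single_ne_zero_iff.mpr one_ne_zero) hv
  refine ⟨a, b, hab, M, fun ξ ξ' h0 h1 => ?_⟩
  have hξ : ξ' = ξ + (ξ' 2 - ξ 2) • Pi.single 2 1 := by
    ext i; fin_cases i <;> simp [h0, h1]
  change Q (M ξ) = Q (M ξ')
  rw [hξ, map_add, map_smul, hM, QuadraticMap.map_add_smul_of_associated_eq_zero Q hrad]
end
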